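/- arXiv:math/0507245 — 3 statements merged into one kernel-verified Lean document; each statement's English description precedes it below -/
import Mathlib

section
/- Let $m \geq 2$ be an integer. The quotient ring $\mathbb{Z}[x]/(x^m, m x^{m-1})$, regarded as an abelian group, is isomorphic to $\mathbb{Z}^{m-1} \oplus \mathbb{Z}/m\mathbb{Z}$. -/
open Polynomial

/-! A polynomial lies in `(X ^ (n + 1), a * X ^ n)` exactly when its coefficients below `n`
vanish and `a` divides its `n`-th coefficient. Hence reading off the first `n` coefficients and
the `n`-th coefficient modulo `a` is a surjection onto `Rⁿ × R/(a)` whose kernel is that ideal. -/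

namespace Polynomial

variable {R : Type*} [CommRing R]

theorem mem_span_X_pow_succ_C_mul_X_pow_iff (a : R) (n : ℕ) (p : R[X]) :
    p ∈ Ideal.span {X ^ (n + 1), C a * X ^ n} ↔ (∀ i < n, p.coeff i = 0) ∧ a ∣ p.coeff n := by
  constructor
  · intro hp
    obtain ⟨u, v, rfl⟩ := Ideal.mem_span_pair.mp hp
    rw [← mul_assoc]
    refine ⟨fun i hi => ?_, ?_⟩
    · simp [coeff_mul_X_pow', show ¬ n + 1 ≤ i by omega, show ¬ n ≤ i by omega]
    · simp [coeff_mul_X_pow']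
  · rintro ⟨hlow, c, hc⟩
    obtain ⟨q, hq⟩ : X ^ (n + 1) ∣ p - C (p.coeff n) * X ^ n := by
      rw [X_pow_dvd_iff]
      intro d hd
      rcases (Nat.lt_succ_iff.mp hd).lt_or_eq with h | rfl
      · simp [coeff_X_pow, h.ne, hlow d h]
      · simp
    have hp : p = q * X ^ (n + 1) + C c * (C a * X ^ n) := by
      rw [mul_comm q, ← hq, hc, C_mul]
      ring
    rw [hp]
    exact Ideal.mem_span_pair.mpr ⟨q, C c, rfl⟩

noncomputable def lowCoeffsModLast (a : R) (n : ℕ) :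
    R[X] →ₗ[R] (Fin n → R) × (R ⧸ Ideal.span {a}) :=
  (LinearMap.pi fun i : Fin n => lcoeff R i).prod ((Ideal.span {a}).mkQ ∘ₗ lcoeff R n)

theorem ker_lowCoeffsModLast (a : R) (n : ℕ) :
    LinearMap.ker (lowCoeffsModLast a n) =
      (Ideal.span {X ^ (n + 1), C a * X ^ n} : Ideal R[X]).restrictScalars R := by
  ext p
  simp [lowCoeffsModLast, mem_span_X_pow_succ_C_mul_X_pow_iff, funext_iff, Fin.forall_iff,
    Ideal.Quotient.eq_zero_iff_dvd]

theorem lowCoeffsModLast_surjective (a : R) (n : ℕ) :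
    Function.Surjective (lowCoeffsModLast a n) := by
  rintro ⟨v, z⟩
  obtain ⟨r, rfl⟩ := Submodule.mkQ_surjective _ z
  set q := (degreeLTEquiv R n).symm v
  have hq : ∀ i : Fin n, (q : R[X]).coeff i = v i := fun i =>
    congrFun ((degreeLTEquiv R n).apply_symm_apply v) i
  have hqn : (q : R[X]).coeff n = 0 :=
    coeff_eq_zero_of_degree_lt (mem_degreeLT.mp q.2)
  refine ⟨q + monomial n r, ?_⟩
  ext i
  · simp [lowCoeffsModLast, coeff_monomial, hq, i.isLt.ne']
  · simp [lowCoeffsModLast, hqn]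

noncomputable def quotientSpanXPowSuccCMulXPowEquiv (a : R) (n : ℕ) :
    (R[X] ⧸ (Ideal.span {X ^ (n + 1), C a * X ^ n} : Ideal R[X])) ≃ₗ[R]
      (Fin n → R) × (R ⧸ Ideal.span {a}) :=
  (Submodule.Quotient.restrictScalarsEquiv R _).symm ≪≫ₗ
    Submodule.quotEquivOfEq _ _ (ker_lowCoeffsModLast a n).symm ≪≫ₗ
    (lowCoeffsModLast a n).quotKerEquivOfSurjective (lowCoeffsModLast_surjective a n)

end Polynomial

theorem stmt_3 (m : ℕ) (hm : 2 ≤ m) :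
    Nonempty ((ℤ[X] ⧸ Ideal.span {(X : ℤ[X]) ^ m, C (m : ℤ) * X ^ (m - 1)}) ≃+
      ((Fin (m - 1) → ℤ) × ZMod m)) := by
  obtain ⟨n, rfl⟩ : ∃ n, m = n + 1 := ⟨m - 1, by omega⟩
  rw [Nat.add_sub_cancel]
  exact ⟨(quotientSpanXPowSuccCMulXPowEquiv ((n + 1 : ℕ) : ℤ) n).toAddEquiv.trans
    (AddEquiv.prodCongr (AddEquiv.refl _) (Int.quotientSpanNatEquivZMod (n + 1)).toAddEquiv)⟩
end

section
/- Let $a, b \in \mathbb{Z}$ with $b^2 + 4a = 0$. Then the quotient ring $\mathbb{Z}[x]/(x^2 - bx - a, \; 2x - b)$, regarded as an abelian group, is isomorphic to $\mathbb{Z} \oplus \mathbb{Z}/2\mathbb{Z}$. -/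
open Polynomial

noncomputable def Fmap (c : ℤ) : ℤ[X] →ₗ[ℤ] ℤ × ZMod 2 where
  toFun p := (p.eval c, ((p.derivative.eval c : ℤ) : ZMod 2))
  map_add' p q := by simp
  map_smul' m p := by
    simp [Prod.smul_def, zsmul_eq_mul]

theorem stmt_5 (a b : ℤ) (h : b ^ 2 + 4 * a = 0) :
    Nonempty ((ℤ[X] ⧸ Ideal.span {(X : ℤ[X]) ^ 2 - C b * X - C a, 2 * X - C b}) ≃+
      (ℤ × ZMod 2)) := by
  have hb : Even (b ^ 2) := ⟨-2 * a, by linarith⟩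
  obtain ⟨c, rfl⟩ : 2 ∣ b := (Int.even_pow.mp hb).1.two_dvd
  have ha : a = -(c ^ 2) := by nlinarith
  subst ha
  have hg1 : (X : ℤ[X]) ^ 2 - C (2 * c) * X - C (-(c ^ 2)) = (X - C c) ^ 2 := by
    simp only [map_mul, map_neg, map_pow, map_ofNat]
    ring
  have hg2 : (2 : ℤ[X]) * X - C (2 * c) = 2 * (X - C c) := by
    simp only [map_mul, map_ofNat]
    ring
  rw [hg1, hg2]
  set I : Ideal ℤ[X] := Ideal.span {(X - C c) ^ 2, 2 * (X - C c)} with hI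
  have hker : LinearMap.ker (Fmap c) ≤ I.restrictScalars ℤ := by
    intro p hp
    simp only [LinearMap.mem_ker, Fmap, LinearMap.coe_mk, AddHom.coe_mk, Prod.mk_eq_zero] at hp
    obtain ⟨h1, h2⟩ := hp
    have hd1 : (X - C c) ∣ p := dvd_iff_isRoot.2 (by simpa [IsRoot] using h1)
    obtain ⟨q, rfl⟩ := hd1
    have hq : q.eval c = ((X - C c) * q).derivative.eval c := by
      simp [derivative_mul]
    have h2' : (2 : ℤ) ∣ q.eval c := by
      have : ((q.eval c : ℤ) : ZMod 2) = 0 := by rw [hq]; exact h2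
      exact (ZMod.intCast_zmod_eq_zero_iff_dvd _ _).1 this
    obtain ⟨m, hm⟩ := h2'
    have hd2 : (X - C c) ∣ (q - C (2 * m)) := by
      apply dvd_iff_isRoot.2
      simp [IsRoot, hm]
    obtain ⟨r, hr⟩ := hd2
    have hq' : q = (X - C c) * r + C (2 * m) := by linear_combination hr
    simp only [Submodule.restrictScalars_mem, hI]
    rw [Ideal.mem_span_pair]
    exact ⟨r, C m, by rw [hq']; simp only [map_mul, map_ofNat]; ring⟩
  have hle : I.restrictScalars ℤ ≤ LinearMap.ker (Fmap c) := by
    intro p hp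
    rw [Submodule.restrictScalars_mem, hI, Ideal.mem_span_pair] at hp
    obtain ⟨u, v, huv⟩ := hp
    simp only [LinearMap.mem_ker, Fmap, LinearMap.coe_mk, AddHom.coe_mk, Prod.mk_eq_zero]
    constructor
    · rw [← huv]; simp
    · rw [← huv]
      have hd : ((derivative (u * (X - C c) ^ 2 + v * (2 * (X - C c)))).eval c) =
          2 * v.eval c := by
        simp [derivative_mul, derivative_pow]
        ring
      rw [hd]
      exact (ZMod.intCast_zmod_eq_zero_iff_dvd _ 2).2 ⟨v.eval c, rfl⟩
  -- lifted map
  let G := Submodule.liftQ (I.restrictScalars ℤ) (Fmap c) hle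
  have hinj : Function.Injective G := by
    rw [← LinearMap.ker_eq_bot]
    exact Submodule.ker_liftQ_eq_bot _ _ _ hker
  have hsurj : Function.Surjective G := by
    rintro ⟨n, m⟩
    refine ⟨Submodule.Quotient.mk (C n + C (m.val : ℤ) * (X - C c)), ?_⟩
    simp only [G, Submodule.liftQ_apply, Fmap, LinearMap.coe_mk, AddHom.coe_mk]
    rw [Prod.mk.injEq]
    constructor
    · simp
    · have hd : derivative (C n + C ((m.val : ℤ)) * (X - C c)) = C ((m.val : ℤ)) := by
        simp only [derivative_add, derivative_C, derivative_mul, derivative_sub, derivative_X, zero_add, zero_mul, mul_one, sub_zero, add_zero]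
      rw [hd, eval_C, Int.cast_natCast, ZMod.natCast_val, ZMod.cast_id]
  exact ⟨((Submodule.Quotient.restrictScalarsEquiv ℤ I).symm.toAddEquiv.trans
    (LinearEquiv.ofBijective G ⟨hinj, hsurj⟩).toAddEquiv)⟩
end

section
/- Let $a, b \in \mathbb{Z}$ with $b$ odd and $b^2 + 4a \neq 0$. Then the quotient ring $\mathbb{Z}[x]/(x^2 - bx - a, \; 2x - b)$, regarded as an abelian group, is a finite cyclic group of order $|b^2 + 4a|$. -/
open Polynomial

theorem stmt_6 (a b : ℤ) (hb : Odd b) (h : b ^ 2 + 4 * a ≠ 0) :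
    Nonempty ((ℤ[X] ⧸ Ideal.span {(X : ℤ[X]) ^ 2 - C b * X - C a, 2 * X - C b}) ≃+
      ZMod (b ^ 2 + 4 * a).natAbs) := by
  obtain ⟨k, hk⟩ := hb
  set N : ℤ := b ^ 2 + 4 * a with hN
  set c : ℤ := -k * b - 2 * a with hc
  set n : ℕ := N.natAbs with hn
  set f : ℤ[X] →+* ZMod n := (Int.castRingHom (ZMod n)).comp (evalRingHom c) with hf
  have hfsurj : Function.Surjective f := by
    intro z
    obtain ⟨m, hm⟩ := ZMod.intCast_surjective (n := n) z
    exact ⟨C m, by simp [hf, hm]⟩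
  have hNzero : ((N : ℤ) : ZMod n) = 0 := by
    rw [ZMod.intCast_zmod_eq_zero_iff_dvd]
    exact Int.natAbs_dvd.mpr dvd_rfl
  have hker : Ideal.span {(X : ℤ[X]) ^ 2 - C b * X - C a, 2 * X - C b} = RingHom.ker f := by
    have hspan : Ideal.span {(X : ℤ[X]) ^ 2 - C b * X - C a, 2 * X - C b}
        = Ideal.span {X - C c, C N} := by
      apply le_antisymm
      · rw [Ideal.span_le]
        rintro p hp
        simp only [Set.mem_insert_iff, Set.mem_singleton_iff] at hp
        rcases hp with rfl | rfl
        · -- x² - bx - a = (X - c)(X + C(c-b)) + C(N*(k^2+k+a))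
          rw [SetLike.mem_coe, Ideal.mem_span_pair]
          refine ⟨X + C (c - b), C (k ^ 2 + k + a), ?_⟩
          simp only [hc, hN, hk]
          simp only [C_add, C_sub, C_neg, C_mul, C_pow, C_1, map_ofNat]
          ring
        · rw [SetLike.mem_coe, Ideal.mem_span_pair]
          refine ⟨C 2, C (-1), ?_⟩
          simp only [hc, hN, hk]
          simp only [C_add, C_sub, C_neg, C_mul, C_pow, C_1, map_ofNat]
          ring
      · rw [Ideal.span_le]
        rintro p hp
        simp only [Set.mem_insert_iff, Set.mem_singleton_iff] at hp
        rcases hp with rfl | rfl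
        · -- X - c = (x - k)(2x - b) - 2 p
          rw [SetLike.mem_coe, Ideal.mem_span_pair]
          refine ⟨C (-2), X - C k, ?_⟩
          simp only [hc, hk]
          simp only [C_add, C_sub, C_neg, C_mul, C_pow, C_1, map_ofNat]
          ring
        · -- C N = (2x-b)² - 4p
          rw [SetLike.mem_coe, Ideal.mem_span_pair]
          refine ⟨C (-4), 2 * X - C b, ?_⟩
          simp only [hN]
          simp only [C_add, C_sub, C_neg, C_mul, C_pow, C_1, map_ofNat]
          ring
    rw [hspan]
    apply le_antisymm
    · rw [Ideal.span_le]
      rintro p hp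
      simp only [Set.mem_insert_iff, Set.mem_singleton_iff] at hp
      rcases hp with rfl | rfl
      · simp [RingHom.mem_ker, hf]
      · simp [RingHom.mem_ker, hf, hNzero]
    · intro p hp
      rw [RingHom.mem_ker] at hp
      simp only [hf, RingHom.coe_comp, Function.comp_apply, coe_evalRingHom,
        eq_intCast, Int.coe_castRingHom] at hp
      rw [ZMod.intCast_zmod_eq_zero_iff_dvd] at hp
      have hdvd : N ∣ p.eval c := (Int.natAbs_dvd).mp hp
      obtain ⟨t, ht⟩ := hdvd
      have h1 : (X - C c) ∣ (p - C (p.eval c)) := X_sub_C_dvd_sub_C_eval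
      obtain ⟨q, hq⟩ := h1
      have : p = (X - C c) * q + C N * C t := by
        rw [← C_mul, ← ht, ← hq]; ring
      rw [this]
      exact Ideal.add_mem _
        (Ideal.mul_mem_right _ _ (Ideal.subset_span (by simp)))
        (Ideal.mul_mem_right _ _ (Ideal.subset_span (by simp)))
  exact ⟨((Ideal.quotEquivOfEq hker).trans
    (RingHom.quotientKerEquivOfSurjective hfsurj)).toAddEquiv⟩
end
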